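/- arXiv:2407.21154 — 2 statements merged into one kernel-verified Lean document; each statement's English description precedes it below -/
import Mathlib

section
/- Suppose {g_r}_{r=1}^R is support consistent with a symmetric matrix A ∈ ℝ^{P×P}, and for each r there exists i_r ∈ g_r with i_r ∉ g_{r'} for all r' ≠ r. If {g̃_k}_{k=1}^K is another support-consistent family with ∪_k g̃_k ⊆ ∪_r g_r, and i_r ∈ g̃_{k_r}, then g̃_{k_r} ⊆ g_r. -/
open Matrix

/-- If `i_r` is unique to `g r`, then any set of another support-consistent family (covering
no new indices) containing `i_r` is contained in `g r`. -/
theorem tilde_clique_subset (P R K : ℕ)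
    (A : Matrix (Fin P) (Fin P) ℝ)
    (hAsym : A.IsSymm)
    (g : Fin R → Set (Fin P))
    (hcons : ∀ i j : Fin P, i ≠ j → (A i j ≠ 0 ↔ ∃ r, i ∈ g r ∧ j ∈ g r))
    (i : Fin R → Fin P)
    (hiu : ∀ r, i r ∈ g r ∧ ∀ r', r' ≠ r → i r ∉ g r')
    (g' : Fin K → Set (Fin P))
    (hcons' : ∀ i j : Fin P, i ≠ j → (A i j ≠ 0 ↔ ∃ k, i ∈ g' k ∧ j ∈ g' k))
    (hsub : (⋃ k, g' k) ⊆ ⋃ r, g r)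
    (r : Fin R) (kr : Fin K) (hik : i r ∈ g' kr) :
    g' kr ⊆ g r := by
  intro j hj
  by_cases hji : j = i r
  · exact hji ▸ (hiu r).1
  · have hne : i r ≠ j := fun h => hji h.symm
    have hA : A (i r) j ≠ 0 := (hcons' _ _ hne).mpr ⟨kr, hik, hj⟩
    obtain ⟨r', hir', hjr'⟩ := (hcons _ _ hne).mp hA
    rcases eq_or_ne r' r with h | h
    · exact h ▸ hjr'
    · exact absurd hir' ((hiu r).2 r' h)
end

section
/- If {g_r}_{r=1}^R and {g̃_k}_{k=1}^K are both support consistent with a symmetric matrix A, each g_r contains a unique element, and ∪_k g̃_k = ∪_r g_r, then K ≥ R. -/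
open Matrix

/-- Any other support-consistent family covering the same indices has at least `R` sets. -/
theorem min_number_of_cliques (P R K : ℕ)
    (A : Matrix (Fin P) (Fin P) ℝ)
    (hAsym : A.IsSymm)
    (g : Fin R → Set (Fin P))
    (hcons : ∀ i j : Fin P, i ≠ j → (A i j ≠ 0 ↔ ∃ r, i ∈ g r ∧ j ∈ g r))
    (huniq : ∀ r, ∃ i ∈ g r, ∀ r', r' ≠ r → i ∉ g r')
    (g' : Fin K → Set (Fin P))
    (hcons' : ∀ i j : Fin P, i ≠ j → (A i j ≠ 0 ↔ ∃ k, i ∈ g' k ∧ j ∈ g' k))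
    (hcover : (⋃ k, g' k) = ⋃ r, g r) :
    R ≤ K := by
  classical
  -- pick the unique element of each g r
  choose i hi hsole using huniq
  -- each i r lies in some g' k
  have hmem : ∀ r, ∃ k, i r ∈ g' k := by
    intro r
    have : i r ∈ ⋃ k, g' k := by
      rw [hcover]; exact Set.mem_iUnion.2 ⟨r, hi r⟩
    exact Set.mem_iUnion.1 this
  choose f hf using hmem
  have hfinj : Function.Injective f := by
    intro r r' hrr'
    by_contra hne
    have hnei : i r ≠ i r' := by
      intro h
      exact hsole r' r (fun h' => hne h') (h ▸ hi r)
    have hA : A (i r) (i r') ≠ 0 := by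
      rw [hcons' _ _ hnei]
      exact ⟨f r, hf r, hrr' ▸ hf r'⟩
    obtain ⟨r'', h1, h2⟩ := (hcons _ _ hnei).1 hA
    have e1 : r'' = r := by
      by_contra h; exact hsole r r'' h h1
    have e2 : r'' = r' := by
      by_contra h; exact hsole r' r'' h h2
    exact hne (e1 ▸ e2)
  simpa using Fintype.card_le_of_injective f hfinj
end
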